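/- Let V₁ and V₂ be metrizable locally convex topological vector spaces, f : V₁ → V₂ a continuous linear map with dense image, O an open subset of V₂, and Õ = f⁻¹(O). Then the restriction f|_Õ : Õ → O is a homotopy equivalence. -/

import Mathlib

/-!
Around each point `i` of `O` choose a ball `B(i, rᵢ)` whose triple lies in a convex subset
`Cᵢ ⊆ O`, and a point `f pᵢ` of the dense image in `B(i, rᵢ)`. As `O` is metrizable, hence
paracompact, a partition of unity `φ` subordinate to these balls gives the continuous map
`g y = ∑ φᵢ(y) • pᵢ`. If `i₀` has the largest radius among the balls containing `y`, then `y` and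
every `f pᵢ` with `φᵢ(y) ≠ 0` lie in `B(i₀, 3 rᵢ₀) ⊆ Cᵢ₀`, so `f (g y) ∈ Cᵢ₀` and the segment from
`f (g y)` to `y` stays in `O`. Straight-line homotopies in `V₂` and in `V₁` then show that `g` is a
homotopy inverse of `f : Õ → O`.
-/

open Set Metric ContinuousMap

namespace ContinuousMap.Homotopic

variable {X E : Type*} [TopologicalSpace X] [AddCommGroup E] [Module ℝ E] [TopologicalSpace E]
  [IsTopologicalAddGroup E] [ContinuousSMul ℝ E]

theorem of_segment_subset {U : Set E} {φ₀ φ₁ : C(X, U)}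
    (h : ∀ x, segment ℝ (φ₀ x : E) (φ₁ x) ⊆ U) : φ₀.Homotopic φ₁ :=
  let H := Homotopy.affine ⟨fun x => (φ₀ x : E), by fun_prop⟩ ⟨fun x => (φ₁ x : E), by fun_prop⟩
  ⟨{ toFun q := ⟨H q, h q.2 (lineMap_mem_segment ℝ _ _ q.1.2)⟩
     continuous_toFun := H.continuous.subtype_mk _
     map_zero_left x := Subtype.ext (H.apply_zero x)
     map_one_left x := Subtype.ext (H.apply_one x) }⟩

end ContinuousMap.Homotopic

namespace ContinuousLinearMap

variable {E F : Type*} [AddCommGroup E] [Module ℝ E] [TopologicalSpace E]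
  [IsTopologicalAddGroup E] [ContinuousSMul ℝ E] [AddCommGroup F] [Module ℝ F]
  [TopologicalSpace F] [IsTopologicalAddGroup F] [ContinuousSMul ℝ F]

noncomputable def homotopyEquivOfSegmentSubset (f : E →L[ℝ] F) {U : Set F} (g : C(U, E))
    (hg : ∀ y : U, segment ℝ (f (g y)) y ⊆ U) : (f ⁻¹' U) ≃ₕ U where
  toFun := (f : C(E, F)).restrictPreimage U
  invFun := ⟨fun y => ⟨g y, hg y (left_mem_segment ℝ _ _)⟩, by fun_prop⟩
  left_inv := .of_segment_subset fun x => image_subset_iff.1 <|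
    (image_segment ℝ (f : E →ₗ[ℝ] F).toAffineMap _ _).trans_subset (hg ⟨f x, x.2⟩)
  right_inv := .of_segment_subset hg

end ContinuousLinearMap

theorem IsOpen.exists_ball_subset_convex_subset {F : Type*} [PseudoMetricSpace F]
    [AddCommMonoid F] [Module ℝ F] [LocallyConvexSpace ℝ F] {O : Set F} (hO : IsOpen O)
    {y : F} (hy : y ∈ O) : ∃ r > 0, ∃ C : Set F, Convex ℝ C ∧ ball y r ⊆ C ∧ C ⊆ O := by
  obtain ⟨C, ⟨hCy, hCconv⟩, hCO⟩ :=
    (LocallyConvexSpace.convex_basis (𝕜 := ℝ) y).mem_iff.1 (hO.mem_nhds hy)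
  obtain ⟨r, hr, hball⟩ := Metric.mem_nhds_iff.1 hCy
  exact ⟨r, hr, C, hCconv, hball, hCO⟩

theorem IsOpen.exists_partitionOfUnity_convex_of_dense {F : Type*} [AddCommMonoid F]
    [Module ℝ F] [TopologicalSpace F] [TopologicalSpace.MetrizableSpace F]
    [LocallyConvexSpace ℝ F] {O : Set F} (hO : IsOpen O) {s : Set F} (hs : Dense s) :
    ∃ (φ : PartitionOfUnity O O univ) (q : O → F), (∀ i, q i ∈ s) ∧
      ∀ y : O, ∃ C ⊆ O, Convex ℝ C ∧ (y : F) ∈ C ∧ ∀ i, φ i y ≠ 0 → q i ∈ C := by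
  let := TopologicalSpace.metrizableSpaceMetric F
  have hball (i : O) : ∃ r > 0, ∃ C : Set F, Convex ℝ C ∧ ball (i : F) (3 * r) ⊆ C ∧ C ⊆ O := by
    obtain ⟨r, hr, hC⟩ := hO.exists_ball_subset_convex_subset i.2
    exact ⟨r / 3, by positivity, by rwa [mul_div_cancel₀ _ three_ne_zero]⟩
  choose r hr C hCconv hCball hCO using hball
  have hq (i : O) : ∃ q ∈ s, q ∈ ball (i : F) (r i) :=
    hs.exists_mem_open isOpen_ball ⟨i, mem_ball_self (hr i)⟩
  choose q hqs hqball using hq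
  obtain ⟨φ, hφ⟩ := PartitionOfUnity.exists_isSubordinate isClosed_univ
    (fun i : O => Subtype.val ⁻¹' ball (i : F) (r i))
    (fun i => isOpen_ball.preimage continuous_subtype_val)
    (fun y _ => mem_iUnion.2 ⟨y, mem_ball_self (hr y)⟩)
  refine ⟨φ, q, hqs, fun y => ?_⟩
  have hy (i : O) (hi : φ i y ≠ 0) : dist (y : F) i < r i := hφ i (subset_tsupport _ hi)
  obtain ⟨j, hj⟩ := φ.exists_pos (mem_univ y)
  obtain ⟨i₀, hi₀, hmax⟩ :=
    (φ.finsupport y).exists_max_image r ⟨j, (φ.mem_finsupport y).2 hj.ne'⟩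
  rw [φ.mem_finsupport] at hi₀
  refine ⟨C i₀, hCO i₀, hCconv i₀, hCball i₀ ?_, fun i hi => hCball i₀ ?_⟩
  · exact ball_subset_ball (by linarith [hr i₀]) (hy i₀ hi₀)
  · have hri : r i ≤ r i₀ := hmax i ((φ.mem_finsupport y).2 hi)
    calc dist (q i) i₀ ≤ dist (q i) i + dist (y : F) i + dist (y : F) i₀ := by
          rw [dist_comm (y : F) i]; exact dist_triangle4 _ _ _ _
      _ < r i + r i + r i₀ := by gcongr; exacts [hqball i, hy i hi, hy i₀ hi₀]
      _ ≤ 3 * r i₀ := by linarith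

theorem DenseRange.exists_continuousMap_segment_subset {E F : Type*} [AddCommMonoid E]
    [Module ℝ E] [TopologicalSpace E] [ContinuousAdd E] [ContinuousSMul ℝ E] [AddCommGroup F]
    [Module ℝ F] [TopologicalSpace F] [TopologicalSpace.MetrizableSpace F]
    [LocallyConvexSpace ℝ F] {f : E →ₗ[ℝ] F} (hf : DenseRange f) {O : Set F} (hO : IsOpen O) :
    ∃ g : C(O, E), ∀ y : O, segment ℝ (f (g y)) y ⊆ O := by
  obtain ⟨φ, q, hq, hC⟩ := hO.exists_partitionOfUnity_convex_of_dense hf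
  choose p hp using hq
  refine ⟨⟨fun y => ∑ᶠ i, φ i y • p i, φ.continuous_finsum_smul fun _ _ _ => continuousAt_const⟩,
    fun y => ?_⟩
  obtain ⟨C, hCO, hCconv, hyC, hqC⟩ := hC y
  have hfg : f (∑ᶠ i, φ i y • p i) = ∑ᶠ i, φ i y • q i := by
    rw [map_finsum f (f := fun i => φ i y • p i)
      ((φ.locallyFinite.point_finite y).subset (Function.support_smul_subset_left _ _))]
    simp only [map_smul, hp]
  refine (hCconv.segment_subset ?_ hyC).trans hCO
  exact hfg ▸ hCconv.finsum_mem (φ.nonneg · y) (φ.sum_eq_one (mem_univ y)) hqC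

theorem palais_dense_linear_homotopyEquiv_general
    (V₁ V₂ : Type*)
    [AddCommGroup V₁] [Module ℝ V₁] [TopologicalSpace V₁] [IsTopologicalAddGroup V₁]
    [ContinuousSMul ℝ V₁]
    [AddCommGroup V₂] [Module ℝ V₂] [TopologicalSpace V₂] [IsTopologicalAddGroup V₂]
    [ContinuousSMul ℝ V₂] [LocallyConvexSpace ℝ V₂] [TopologicalSpace.MetrizableSpace V₂]
    (f : V₁ →L[ℝ] V₂) (hdense : DenseRange f)
    (O : Set V₂) (hO : IsOpen O) :
    ∃ e : ContinuousMap.HomotopyEquiv (f ⁻¹' O) O,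
      ∀ x : (f ⁻¹' O : Set V₁), ((e.toFun x : O) : V₂) = f x := by
  obtain ⟨g, hg⟩ := DenseRange.exists_continuousMap_segment_subset (f := f.toLinearMap) hdense hO
  exact ⟨f.homotopyEquivOfSegmentSubset g hg, fun _ => rfl⟩

/-- Palais: Let `V₁, V₂` be metrizable locally convex topological vector
spaces, `f : V₁ → V₂` a continuous linear map with dense image, `O ⊆ V₂` open and
`Õ = f⁻¹(O)`.  Then the restriction `f|_Õ : Õ → O` is a homotopy equivalence. -/
theorem palais_dense_linear_homotopyEquiv
    (V₁ V₂ : Type*)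
    [AddCommGroup V₁] [Module ℝ V₁] [TopologicalSpace V₁] [IsTopologicalAddGroup V₁]
    [ContinuousSMul ℝ V₁] [LocallyConvexSpace ℝ V₁] [TopologicalSpace.MetrizableSpace V₁]
    [AddCommGroup V₂] [Module ℝ V₂] [TopologicalSpace V₂] [IsTopologicalAddGroup V₂]
    [ContinuousSMul ℝ V₂] [LocallyConvexSpace ℝ V₂] [TopologicalSpace.MetrizableSpace V₂]
    (f : V₁ →L[ℝ] V₂) (hdense : DenseRange f)
    (O : Set V₂) (hO : IsOpen O) :
    ∃ e : ContinuousMap.HomotopyEquiv (f ⁻¹' O) O,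
      ∀ x : (f ⁻¹' O : Set V₁), ((e.toFun x : O) : V₂) = f x :=
  palais_dense_linear_homotopyEquiv_general V₁ V₂ f hdense O hO
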